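/- arXiv:2508.18144 — 4 statements merged into one kernel-verified Lean document; each statement's English description precedes it below -/
import Mathlib

section
/- Let T_n = L_1 + ⋯ + L_{n-1} where the L_k are independent and L_k is exponentially distributed with mean m+k-1 (for a fixed integer m ≥ 1). Then T_n / n² → 1/2 almost surely as n → ∞. -/
/-!
`T_n` has mean `∼ n² / 2` and variance `∑ (m + k)² = O(n³)`. Along the squares `n = j²`,
Chebyshev bounds `P(|T_n - E T_n| ≥ ε n²)` by `O(1 / (ε² j²))`, which is summable, so by
Borel–Cantelli `T_{j²} / j⁴ → 1/2` almost surely. As `T_n` is nondecreasing in `n` and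
`(j + 1)² / j² → 1`, every `T_n / n²` is squeezed between the values at neighbouring squares.
-/

open MeasureTheory ProbabilityTheory Filter Finset Set Topology

lemma tendsto_sum_range_add_div_sq (a : ℝ) :
    Tendsto (fun n : ℕ => (∑ k ∈ range n, (a + k)) / (n : ℝ) ^ 2) atTop (𝓝 (1 / 2)) := by
  have hsum (n : ℕ) : ∑ k ∈ range n, (a + k) = n * a + n * (n - 1) / 2 := by
    induction n with
    | zero => simp
    | succ n ih => rw [sum_range_succ, ih]; push_cast; ring
  have hinv := tendsto_inv_atTop_zero.comp (tendsto_natCast_atTop_atTop (R := ℝ))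
  have hlim : Tendsto (fun n : ℕ => a * (n : ℝ)⁻¹ + (1 - (n : ℝ)⁻¹) / 2) atTop
      (𝓝 (a * 0 + (1 - 0) / 2)) :=
    (hinv.const_mul a).add ((hinv.const_sub 1).div_const 2)
  rw [show a * 0 + (1 - 0) / 2 = (1 / 2 : ℝ) by ring] at hlim
  refine hlim.congr' <| (eventually_ne_atTop 0).mono fun n hn => ?_
  dsimp only
  rw [hsum]
  field_simp

lemma sum_range_add_sq_le {a : ℝ} (ha : 0 ≤ a) (n : ℕ) :
    ∑ k ∈ range n, (a + k) ^ 2 ≤ (a + 1) ^ 2 * (n : ℝ) ^ 3 := by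
  calc ∑ k ∈ range n, (a + k) ^ 2 ≤ ∑ k ∈ range n, ((a + 1) * n) ^ 2 := by
        gcongr with k hk
        have : (k : ℝ) + 1 ≤ n := by exact_mod_cast mem_range.1 hk
        nlinarith
    _ = (a + 1) ^ 2 * (n : ℝ) ^ 3 := by simp only [sum_const, card_range, nsmul_eq_mul]; ring

lemma tendsto_div_sq_of_monotone {s : ℕ → ℝ} (hs : Monotone s) (hs0 : 0 ≤ s 0) {c : ℝ}
    (h : Tendsto (fun j : ℕ => s (j ^ 2) / (j : ℝ) ^ 4) atTop (𝓝 c)) :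
    Tendsto (fun n : ℕ => s n / (n : ℝ) ^ 2) atTop (𝓝 c) := by
  have hratio : Tendsto (fun j : ℕ => (j : ℝ) / (j + 1)) atTop (𝓝 1) :=
    tendsto_natCast_div_add_atTop 1
  have hlower : Tendsto (fun j : ℕ => s (j ^ 2) / ((j : ℝ) + 1) ^ 4) atTop (𝓝 c) := by
    have := h.mul (hratio.pow 4)
    rw [one_pow, mul_one] at this
    refine this.congr' <| (eventually_ne_atTop 0).mono fun j hj => ?_
    field_simp
  have hupper : Tendsto (fun j : ℕ => s ((j + 1) ^ 2) / (j : ℝ) ^ 4) atTop (𝓝 c) := by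
    have := ((tendsto_add_atTop_iff_nat 1).2 h).mul ((hratio.inv₀ one_ne_zero).pow 4)
    rw [inv_one, one_pow, mul_one] at this
    refine this.congr' <| (eventually_ne_atTop 0).mono fun j hj => ?_
    push_cast
    field_simp
  have hsqrt : Tendsto Nat.sqrt atTop atTop :=
    tendsto_atTop_atTop.2 fun b => ⟨b * b, fun n hn => Nat.le_sqrt.2 hn⟩
  have hnonneg (n : ℕ) : 0 ≤ s n := hs0.trans (hs n.zero_le)
  refine tendsto_of_tendsto_of_tendsto_of_le_of_le' (hlower.comp hsqrt) (hupper.comp hsqrt)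
    ?_ ?_ <;> filter_upwards [eventually_ge_atTop 1] with n hn <;> simp only [Function.comp_apply]
  · refine div_le_div₀ (hnonneg n) (hs (Nat.sqrt_le' n)) (by positivity) ?_
    calc (n : ℝ) ^ 2 ≤ (((Nat.sqrt n : ℕ) + 1) ^ 2) ^ 2 := by
          gcongr; exact_mod_cast (Nat.lt_succ_sqrt' n).le
      _ = _ := by ring
  · refine div_le_div₀ (hnonneg _) (hs (Nat.lt_succ_sqrt' n).le) (by positivity) ?_
    calc ((Nat.sqrt n : ℕ) : ℝ) ^ 4 = (((Nat.sqrt n : ℕ) : ℝ) ^ 2) ^ 2 := by ring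
      _ ≤ (n : ℝ) ^ 2 := by gcongr; exact_mod_cast Nat.sqrt_le' n

lemma tendsto_pred_div_sq {s : ℕ → ℝ} {c : ℝ}
    (h : Tendsto (fun n : ℕ => s n / (n : ℝ) ^ 2) atTop (𝓝 c)) :
    Tendsto (fun n : ℕ => s (n - 1) / (n : ℝ) ^ 2) atTop (𝓝 c) := by
  have hshift : Tendsto (fun n : ℕ => s n / ((n : ℝ) + 1) ^ 2) atTop (𝓝 c) := by
    have := h.mul ((tendsto_natCast_div_add_atTop (1 : ℝ)).pow 2)
    rw [one_pow, mul_one] at this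
    refine this.congr' <| (eventually_ne_atTop 0).mono fun n hn => ?_
    field_simp
  refine (hshift.comp (tendsto_sub_atTop_nat 1)).congr' <|
    (eventually_ge_atTop 1).mono fun n hn => ?_
  simp [Function.comp_apply, Nat.cast_sub hn]

-- `r` is the mean, not the rate as in `ProbabilityTheory.expMeasure r`.
def HasExponentialTail {Ω : Type*} [MeasurableSpace Ω] (μ : Measure Ω) (X : Ω → ℝ) (r : ℝ) :
    Prop :=
  ∀ t : ℝ, 0 ≤ t → μ {ω | t < X ω} = ENNReal.ofReal (Real.exp (-(t / r)))

namespace HasExponentialTail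

variable {Ω : Type*} [MeasurableSpace Ω] {μ : Measure Ω} [IsProbabilityMeasure μ]
  {X : Ω → ℝ} {r : ℝ}

lemma ae_pos (h : HasExponentialTail μ X r) (hX : Measurable X) : ∀ᵐ ω ∂μ, 0 < X ω := by
  have hcompl : μ {ω | 0 < X ω}ᶜ = 0 := by
    rw [prob_compl_eq_zero_iff (measurableSet_lt measurable_const hX), h 0 le_rfl]
    simp
  exact measure_eq_zero_iff_ae_notMem.mp hcompl |>.mono fun ω hω => by simpa using hω

lemma lintegral_rpow (h : HasExponentialTail μ X r) (hX : Measurable X) (hr : 0 < r) {p : ℝ}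
    (hp : 0 < p) :
    ∫⁻ ω, ENNReal.ofReal (X ω ^ p) ∂μ = ENNReal.ofReal (Real.Gamma (p + 1) * r ^ p) := by
  have hint : IntegrableOn (fun t : ℝ => t ^ (p - 1) * Real.exp (-(r⁻¹ * t))) (Ioi 0) := by
    simpa [neg_mul] using
      integrableOn_rpow_mul_exp_neg_mul_rpow (by linarith) one_pos (inv_pos.2 hr)
  rw [lintegral_rpow_eq_lintegral_meas_lt_mul μ ((h.ae_pos hX).mono fun _ => le_of_lt)
      hX.aemeasurable hp,
    setLIntegral_congr_fun measurableSet_Ioi fun t ht => by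
      rw [h t (le_of_lt ht), ← ENNReal.ofReal_mul (Real.exp_pos _).le, mul_comm, div_eq_inv_mul],
    ← ofReal_integral_eq_lintegral_ofReal hint
      (ae_restrict_of_forall_mem measurableSet_Ioi fun t (ht : 0 < t) => by positivity),
    Real.integral_rpow_mul_exp_neg_mul_Ioi hp (inv_pos.2 hr), ← ENNReal.ofReal_mul hp.le,
    Real.Gamma_add_one hp.ne', one_div, inv_inv]
  ring_nf

lemma integrable_rpow (h : HasExponentialTail μ X r) (hX : Measurable X) (hr : 0 < r) {p : ℝ}
    (hp : 0 < p) : Integrable (fun ω => X ω ^ p) μ :=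
  ⟨(hX.pow_const p).aestronglyMeasurable, by
    rw [hasFiniteIntegral_iff_ofReal ((h.ae_pos hX).mono fun _ hx => by positivity),
      h.lintegral_rpow hX hr hp]
    exact ENNReal.ofReal_lt_top⟩

lemma integral_rpow (h : HasExponentialTail μ X r) (hX : Measurable X) (hr : 0 < r) {p : ℝ}
    (hp : 0 < p) : ∫ ω, X ω ^ p ∂μ = Real.Gamma (p + 1) * r ^ p := by
  rw [integral_eq_lintegral_of_nonneg_ae ((h.ae_pos hX).mono fun _ hx => by positivity)
      (hX.pow_const p).aestronglyMeasurable, h.lintegral_rpow hX hr hp,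
    ENNReal.toReal_ofReal (by positivity)]

lemma memLp_two (h : HasExponentialTail μ X r) (hX : Measurable X) (hr : 0 < r) :
    MemLp X 2 μ :=
  (memLp_two_iff_integrable_sq hX.aestronglyMeasurable).2 <| by
    simpa only [Real.rpow_two] using h.integrable_rpow hX hr two_pos

lemma integral_eq (h : HasExponentialTail μ X r) (hX : Measurable X) (hr : 0 < r) :
    μ[X] = r := by
  simpa [Real.rpow_one, one_add_one_eq_two, Real.Gamma_two] using h.integral_rpow hX hr one_pos

lemma variance_eq (h : HasExponentialTail μ X r) (hX : Measurable X) (hr : 0 < r) :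
    variance X μ = r ^ 2 := by
  have hsq : μ[X ^ 2] = 2 * r ^ 2 := by
    have := h.integral_rpow hX hr two_pos
    rw [show (2 : ℝ) + 1 = (2 : ℕ) + 1 by norm_num, Real.Gamma_nat_eq_factorial] at this
    simpa [Real.rpow_two] using this
  rw [variance_eq_sub (h.memLp_two hX hr), hsq, h.integral_eq hX hr]
  ring

end HasExponentialTail

section BorelCantelli

variable {Ω : Type*} [MeasurableSpace Ω] {μ : Measure Ω} [IsFiniteMeasure μ] {Y : ℕ → Ω → ℝ}

lemma ae_eventually_abs_sub_integral_lt_of_summable_variance (hY : ∀ j, MemLp (Y j) 2 μ)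
    (hsum : Summable fun j => variance (Y j) μ) {ε : ℝ} (hε : 0 < ε) :
    ∀ᵐ ω ∂μ, ∀ᶠ j in atTop, |Y j ω - μ[Y j]| < ε := by
  have hfin : ∑' j, μ {ω | ε ≤ |Y j ω - μ[Y j]|} ≠ ⊤ := by
    refine ne_top_of_le_ne_top ?_
      (ENNReal.tsum_le_tsum fun j => meas_ge_le_variance_div_sq (hY j) hε)
    rw [← ENNReal.ofReal_tsum_of_nonneg (fun j => div_nonneg (variance_nonneg _ _) (sq_nonneg ε))
      (hsum.div_const _)]
    exact ENNReal.ofReal_ne_top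
  filter_upwards [ae_eventually_notMem hfin] with ω hω
  simpa using hω

lemma ae_tendsto_sub_integral_of_summable_variance (hY : ∀ j, MemLp (Y j) 2 μ)
    (hsum : Summable fun j => variance (Y j) μ) :
    ∀ᵐ ω ∂μ, Tendsto (fun j => Y j ω - μ[Y j]) atTop (𝓝 0) := by
  have h := ae_all_iff.2 fun i : ℕ =>
    ae_eventually_abs_sub_integral_lt_of_summable_variance hY hsum (Nat.one_div_pos_of_nat (n := i))
  filter_upwards [h] with ω hω
  refine NormedAddGroup.tendsto_nhds_zero.2 fun ε hε => ?_
  obtain ⟨i, hi⟩ := exists_nat_one_div_lt hε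
  filter_upwards [hω i] with j hj
  exact (Real.norm_eq_abs _).trans_lt (hj.trans hi)

lemma ae_tendsto_sum_range_div_sq {L : ℕ → Ω → ℝ} (hL : ∀ k, MemLp (L k) 2 μ)
    (hnonneg : ∀ k, 0 ≤ᵐ[μ] L k) {c C : ℝ}
    (hmean : Tendsto (fun n : ℕ => (∑ k ∈ range n, μ[L k]) / (n : ℝ) ^ 2) atTop (𝓝 c))
    (hvar : ∀ n : ℕ, variance (∑ k ∈ range n, L k) μ ≤ C * (n : ℝ) ^ 3) :
    ∀ᵐ ω ∂μ, Tendsto (fun n : ℕ => (∑ k ∈ range n, L k ω) / (n : ℝ) ^ 2) atTop (𝓝 c) := by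
  set Y : ℕ → Ω → ℝ := fun j ω => (∑ k ∈ range (j ^ 2), L k ω) / (j : ℝ) ^ 4
  have hY (j : ℕ) : MemLp (Y j) 2 μ := by
    simpa only [Y, div_eq_mul_inv] using (memLp_finsetSum _ fun k _ => hL k).mul_const _
  have hvarY (j : ℕ) : variance (Y j) μ ≤ C * ((j : ℝ) ^ 2)⁻¹ := by
    have : variance (Y j) μ =
        variance (∑ k ∈ range (j ^ 2), L k) μ * (((j : ℝ) ^ 4)⁻¹) ^ 2 := by
      simp only [Y, div_eq_mul_inv, ← variance_mul_const, Finset.sum_apply]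
    rw [this]
    rcases j.eq_zero_or_pos with rfl | hj
    · simp
    calc _ ≤ C * ((j ^ 2 : ℕ) : ℝ) ^ 3 * (((j : ℝ) ^ 4)⁻¹) ^ 2 := by gcongr; exact hvar _
      _ = C * ((j : ℝ) ^ 2)⁻¹ := by push_cast; field_simp
  have hsum : Summable fun j => variance (Y j) μ :=
    .of_nonneg_of_le (fun j => variance_nonneg _ _) hvarY
      ((Real.summable_nat_pow_inv.2 one_lt_two).mul_left C)
  have hmeanY : Tendsto (fun j => μ[Y j]) atTop (𝓝 c) := by
    refine (hmean.comp (tendsto_pow_atTop two_ne_zero)).congr fun j => ?_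
    simp only [Y, Function.comp_apply, integral_div,
      integral_finsetSum _ fun k _ => (hL k).integrable one_le_two]
    push_cast
    ring
  filter_upwards [ae_tendsto_sub_integral_of_summable_variance hY hsum, ae_all_iff.2 hnonneg]
    with ω hω hωnonneg
  refine tendsto_div_sq_of_monotone (s := fun n => ∑ k ∈ range n, L k ω) ?_ (by simp) ?_
  · exact fun a b hab => sum_le_sum_of_subset_of_nonneg (range_subset_range.2 hab)
      fun k _ _ => hωnonneg k
  · simpa [Y] using hω.add hmeanY

end BorelCantelli

/-- Let `T_n = L_1 + ⋯ + L_{n-1}` where the `L_k` are independent and `L_k` is exponentially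
distributed with mean `m + k - 1` (for a fixed integer `m ≥ 1`).  Then `T_n / n² → 1/2`
almost surely as `n → ∞`.  Here `L k` (for `k : ℕ`) plays the role of `L_{k+1}`, so it has
mean `m + k`, and `T n = ∑_{k < n-1} L k`. -/
theorem birth_times_asymptotics
    {Ω : Type*} [MeasurableSpace Ω] (μ : Measure Ω) [IsProbabilityMeasure μ]
    (m : ℕ) (hm : 1 ≤ m) (L : ℕ → Ω → ℝ)
    (hmeas : ∀ k, Measurable (L k))
    (hindep : iIndepFun L μ)
    (hlaw : ∀ k : ℕ, ∀ t : ℝ, 0 ≤ t →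
      μ {ω | t < L k ω} = ENNReal.ofReal (Real.exp (-(t / ((m : ℝ) + (k : ℝ)))))) :
    ∀ᵐ ω ∂μ,
      Filter.Tendsto
        (fun n : ℕ => (∑ k ∈ Finset.range (n - 1), L k ω) / (n : ℝ) ^ 2)
        Filter.atTop (nhds (1 / 2)) := by
  have hexp (k : ℕ) : HasExponentialTail μ (L k) ((m : ℝ) + k) := hlaw k
  have hpos (k : ℕ) : 0 < (m : ℝ) + k := by norm_cast; omega
  have hmemLp (k : ℕ) : MemLp (L k) 2 μ := (hexp k).memLp_two (hmeas k) (hpos k)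
  have hmean :
      Tendsto (fun n : ℕ => (∑ k ∈ range n, μ[L k]) / (n : ℝ) ^ 2) atTop (𝓝 (1 / 2)) := by
    simpa only [(hexp _).integral_eq (hmeas _) (hpos _)] using tendsto_sum_range_add_div_sq m
  have hvar (n : ℕ) : variance (∑ k ∈ range n, L k) μ ≤ ((m : ℝ) + 1) ^ 2 * (n : ℝ) ^ 3 := by
    rw [IndepFun.variance_sum (fun k _ => hmemLp k) fun i _ j _ hij => hindep.indepFun hij]
    simpa only [(hexp _).variance_eq (hmeas _) (hpos _)] using sum_range_add_sq_le m.cast_nonneg n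
  filter_upwards [ae_tendsto_sum_range_div_sq hmemLp
    (fun k => ((hexp k).ae_pos (hmeas k)).mono fun _ h => h.le) hmean hvar] with ω hω
  exact tendsto_pred_div_sq hω
end

section
/- Consider the recursion a_{n+1} = α_n a_n + β_n/(n−1) for n ≥ i, with a_i = m, where α_n = ∏_{j=0}^{m-1}(1 − 1/((n−1)(j + m(2n−1)))) and β_n = 1 + ∑_{k=1}^{m-1} ∏_{j=m-k}^{m-1}(1 − 1/((n−1)(j + m(2n−1)))). Then a_n / (m log n) → 1 as n → ∞. -/
/-!
Every factor `1 - 1/((n-1)(j + m(2n-1)))` lies between `1 - c_n/m` and `1`, where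
`c_n = 1/((n-1)(2n-1))`, so `α_n ∈ [1 - c_n, 1]` and `β_n ∈ [m(1 - c_n), m]`. Hence the increment
`a_{n+1} - a_n` differs from `m/(n-1)` by at most `c_n (a_n + m)`. The crude bound
`a_{n+1} ≤ a_n + m/(n-1)` already gives `a_n ≤ 4m√n`, so these errors are `O(n^{-3/2})` and
summable. Since `1/(n-1) - log((n+1)/n) = O(n⁻²)` as well, `a_n - m log n` converges, and the
ratio tends to `1`.
-/

open Finset Filter Real Asymptotics Topology

theorem tendsto_of_summable_sub_succ {u : ℕ → ℝ} (h : Summable fun n => u (n + 1) - u n) :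
    Tendsto u atTop (𝓝 (u 0 + ∑' n, (u (n + 1) - u n))) := by
  refine (tendsto_const_nhds.add h.hasSum.tendsto_sum_nat).congr fun n => ?_
  rw [Finset.sum_range_sub]
  ring

theorem tendsto_div_nhds_one_of_tendsto_sub {x g : ℕ → ℝ} {l : ℝ} (hg : Tendsto g atTop atTop)
    (hx : Tendsto (fun n => x n - g n) atTop (𝓝 l)) :
    Tendsto (fun n => x n / g n) atTop (𝓝 1) := by
  have hequiv : x ~[atTop] g :=
    (hx.isBigO_one ℝ).trans_isLittleO
      ((isLittleO_one_left_iff ℝ).2 (tendsto_norm_atTop_atTop.comp hg))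
  exact (isEquivalent_iff_tendsto_one (hg.eventually_ne_atTop 0)).1 hequiv

theorem log_add_one_sub_log_mem_Icc {x : ℝ} (hx : 0 < x) :
    log (x + 1) - log x ∈ Set.Icc (1 / (x + 1)) (1 / x) := by
  rw [Set.mem_Icc, ← log_div (by positivity) hx.ne']
  constructor
  · calc 1 / (x + 1) = 1 - ((x + 1) / x)⁻¹ := by field_simp; ring
      _ ≤ _ := one_sub_inv_le_log_of_pos (by positivity)
  · calc log ((x + 1) / x) ≤ (x + 1) / x - 1 := log_le_sub_one_of_pos (by positivity)
      _ = 1 / x := by field_simp; ring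

theorem summable_inv_sub_one_sub_log_succ_sub_log :
    Summable fun n : ℕ => 1 / ((n : ℝ) - 1) - (log (n + 1) - log n) := by
  refine Summable.of_norm_bounded_eventually_nat
    ((Real.summable_one_div_nat_pow.2 one_lt_two).mul_left 4) ?_
  filter_upwards [eventually_ge_atTop 2] with n hn
  have hn' : (2 : ℝ) ≤ n := by exact_mod_cast hn
  obtain ⟨hlo, hhi⟩ := log_add_one_sub_log_mem_Icc (x := (n : ℝ)) (by positivity)
  have hinv : 1 / (n : ℝ) ≤ 1 / ((n : ℝ) - 1) := one_div_le_one_div_of_le (by linarith) (by linarith)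
  rw [Real.norm_of_nonneg (by linarith)]
  have hgap : 1 / ((n : ℝ) - 1) - 1 / ((n : ℝ) + 1) ≤ 4 * (1 / (n : ℝ) ^ 2) := by
    rw [div_sub_div _ _ (by linarith) (by linarith), div_le_iff₀ (by nlinarith)]
    field_simp
    nlinarith
  linarith

theorem tendsto_div_mul_log_of_summable {c : ℝ} (hc : 0 < c) {x : ℕ → ℝ}
    (h : Summable fun n : ℕ => x (n + 1) - x n - c / ((n : ℝ) - 1)) :
    Tendsto (fun n : ℕ => x n / (c * log n)) atTop (𝓝 1) := by
  have hlog : Tendsto (fun n : ℕ => c * log n) atTop atTop :=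
    (tendsto_log_atTop.comp tendsto_natCast_atTop_atTop).const_mul_atTop hc
  have hsum : Summable fun n : ℕ => (x (n + 1) - c * log ↑(n + 1)) - (x n - c * log n) :=
    (h.add (summable_inv_sub_one_sub_log_succ_sub_log.mul_left c)).congr fun n => by
      push_cast; ring
  exact tendsto_div_nhds_one_of_tendsto_sub hlog (tendsto_of_summable_sub_succ hsum)

theorem four_mul_sqrt_add_one_div_sub_one_le {x : ℝ} (hx : 2 ≤ x) :
    4 * √x + 1 / (x - 1) ≤ 4 * √(x + 1) := by
  have hs := Real.sq_sqrt (by linarith : (0 : ℝ) ≤ x)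
  have ht := Real.sq_sqrt (by linarith : (0 : ℝ) ≤ x + 1)
  have hst : √x ≤ √(x + 1) := Real.sqrt_le_sqrt (by linarith)
  have hs1 : 1 ≤ √x := Real.one_le_sqrt.2 (by linarith)
  have ht2 : √(x + 1) ≤ 2 * (x - 1) := by nlinarith
  -- `(√(x + 1) - √x) (√(x + 1) + √x) = 1` and `√(x + 1) + √x ≤ 4 (x - 1)`
  have : 1 / (x - 1) ≤ 4 * (√(x + 1) - √x) := by
    rw [div_le_iff₀ (by linarith)]
    nlinarith
  linarith

theorem le_four_mul_sqrt_of_succ_le_add {x : ℕ → ℝ} {i : ℕ} {C : ℝ} (hi : 2 ≤ i) (hC : 0 ≤ C)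
    (hx : x i ≤ C) (hstep : ∀ n ≥ i, x (n + 1) ≤ x n + C / ((n : ℝ) - 1)) :
    ∀ n ≥ i, x n ≤ 4 * C * √n := by
  intro n hn
  induction n, hn using Nat.le_induction with
  | base =>
    have : 1 ≤ √(i : ℝ) := Real.one_le_sqrt.2 (by exact_mod_cast (by omega : 1 ≤ i))
    nlinarith
  | succ n hn ih =>
    have key := four_mul_sqrt_add_one_div_sub_one_le (x := n) (by exact_mod_cast hi.trans hn)
    calc x (n + 1) ≤ 4 * C * √n + C / ((n : ℝ) - 1) := by linarith [hstep n hn]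
      _ = C * (4 * √n + 1 / ((n : ℝ) - 1)) := by ring
      _ ≤ C * (4 * √(n + 1)) := by gcongr
      _ = 4 * C * √↑(n + 1) := by push_cast; ring

theorem Finset.one_add_card_mul_sub_le_prod {ι : Type*} {s : Finset ι} {f : ι → ℝ} {a : ℝ}
    (ha : 0 ≤ a) (h : ∀ j ∈ s, a ≤ f j) : 1 + #s * (a - 1) ≤ ∏ j ∈ s, f j :=
  calc 1 + #s * (a - 1) ≤ a ^ #s := one_add_mul_sub_le_pow (by linarith) _
    _ = ∏ _j ∈ s, a := (prod_const a).symm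
    _ ≤ ∏ j ∈ s, f j := prod_le_prod (fun _ _ => ha) h

noncomputable def deprefFactor (m n j : ℕ) : ℝ :=
  1 - 1 / (((n : ℝ) - 1) * ((j : ℝ) + (m : ℝ) * (2 * (n : ℝ) - 1)))

noncomputable def deprefAlpha (m n : ℕ) : ℝ :=
  ∏ j ∈ range m, deprefFactor m n j

noncomputable def deprefBeta (m n : ℕ) : ℝ :=
  1 + ∑ k ∈ Icc 1 (m - 1), ∏ j ∈ Icc (m - k) (m - 1), deprefFactor m n j

noncomputable def deprefStep (m n : ℕ) (x : ℝ) : ℝ :=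
  deprefAlpha m n * x + deprefBeta m n / ((n : ℝ) - 1)

noncomputable def deprefDefect (n : ℕ) : ℝ :=
  1 / (((n : ℝ) - 1) * (2 * (n : ℝ) - 1))

section

variable {m n : ℕ}

theorem deprefDefect_nonneg (hn : 2 ≤ n) : 0 ≤ deprefDefect n := by
  have : (2 : ℝ) ≤ n := by exact_mod_cast hn
  unfold deprefDefect
  exact one_div_nonneg.2 (by nlinarith)

theorem deprefDefect_le_one (hn : 2 ≤ n) : deprefDefect n ≤ 1 := by
  have : (2 : ℝ) ≤ n := by exact_mod_cast hn
  unfold deprefDefect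
  rw [div_le_one (by nlinarith)]
  nlinarith

theorem deprefDefect_mul_sqrt_le (hn : 2 ≤ n) :
    deprefDefect n * √n ≤ 2 * ((n : ℝ) ^ (3 / 2 : ℝ))⁻¹ := by
  have hn' : (2 : ℝ) ≤ n := by exact_mod_cast hn
  have hsq : √n * √n = (n : ℝ) := Real.mul_self_sqrt (by positivity)
  have hpow : (n : ℝ) ^ (3 / 2 : ℝ) = n * √n := by
    rw [show (3 / 2 : ℝ) = 1 + 1 / 2 by norm_num, Real.rpow_add (by positivity), Real.rpow_one,
      Real.sqrt_eq_rpow]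
  rw [hpow, deprefDefect, div_mul_eq_mul_div, one_mul, div_le_iff₀ (by nlinarith)]
  field_simp
  nlinarith

theorem deprefFactor_le_one (hn : 2 ≤ n) (j : ℕ) : deprefFactor m n j ≤ 1 := by
  have : (2 : ℝ) ≤ n := by exact_mod_cast hn
  have : 0 ≤ ((n : ℝ) - 1) * ((j : ℝ) + (m : ℝ) * (2 * (n : ℝ) - 1)) :=
    mul_nonneg (by linarith) (by nlinarith [j.cast_nonneg (α := ℝ), m.cast_nonneg (α := ℝ)])
  unfold deprefFactor
  linarith [one_div_nonneg.2 this]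

theorem one_sub_deprefDefect_div_le_deprefFactor (hm : 1 ≤ m) (hn : 2 ≤ n) (j : ℕ) :
    1 - deprefDefect n / m ≤ deprefFactor m n j := by
  have hn' : (2 : ℝ) ≤ n := by exact_mod_cast hn
  have hm' : (1 : ℝ) ≤ m := by exact_mod_cast hm
  have hj : (0 : ℝ) ≤ j := j.cast_nonneg
  have : 1 / (((n : ℝ) - 1) * ((j : ℝ) + (m : ℝ) * (2 * (n : ℝ) - 1))) ≤ deprefDefect n / m := by
    rw [deprefDefect, div_div]
    have h3 : (3 : ℝ) ≤ ((n : ℝ) - 1) * (2 * (n : ℝ) - 1) := by nlinarith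
    apply one_div_le_one_div_of_le (by nlinarith)
    nlinarith
  unfold deprefFactor
  linarith

theorem deprefDefect_div_le_one (hm : 1 ≤ m) (hn : 2 ≤ n) : deprefDefect n / m ≤ 1 :=
  div_le_one_of_le₀ ((deprefDefect_le_one hn).trans (by exact_mod_cast hm)) (Nat.cast_nonneg m)

theorem one_sub_deprefDefect_le_prod (hm : 1 ≤ m) (hn : 2 ≤ n) {s : Finset ℕ} (hs : #s ≤ m) :
    1 - deprefDefect n ≤ ∏ j ∈ s, deprefFactor m n j := by
  have hm' : (0 : ℝ) < m := by exact_mod_cast hm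
  have hs' : (#s : ℝ) ≤ m := by exact_mod_cast hs
  have hc := deprefDefect_nonneg hn
  refine le_trans ?_ (one_add_card_mul_sub_le_prod (sub_nonneg.2 (deprefDefect_div_le_one hm hn))
    fun j _ => one_sub_deprefDefect_div_le_deprefFactor hm hn j)
  have : (#s : ℝ) * (deprefDefect n / m) ≤ deprefDefect n := by
    rw [mul_div_assoc', div_le_iff₀ hm']
    exact mul_le_mul_of_nonneg_right hs' hc |>.trans_eq (mul_comm _ _)
  linarith

theorem prod_deprefFactor_le_one (hm : 1 ≤ m) (hn : 2 ≤ n) (s : Finset ℕ) :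
    ∏ j ∈ s, deprefFactor m n j ≤ 1 :=
  prod_le_one (fun j _ => (sub_nonneg.2 (deprefDefect_div_le_one hm hn)).trans
    (one_sub_deprefDefect_div_le_deprefFactor hm hn j)) fun j _ => deprefFactor_le_one hn j

theorem deprefAlpha_mem_Icc (hm : 1 ≤ m) (hn : 2 ≤ n) :
    deprefAlpha m n ∈ Set.Icc (1 - deprefDefect n) 1 :=
  ⟨one_sub_deprefDefect_le_prod hm hn (by simp), prod_deprefFactor_le_one hm hn _⟩

theorem deprefBeta_mem_Icc (hm : 1 ≤ m) (hn : 2 ≤ n) :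
    deprefBeta m n ∈ Set.Icc (m * (1 - deprefDefect n)) m := by
  have hcard : ((m - 1 : ℕ) : ℝ) = m - 1 := by rw [Nat.cast_sub hm, Nat.cast_one]
  have hc := deprefDefect_le_one hn
  have hc0 := deprefDefect_nonneg hn
  constructor
  · have := card_nsmul_le_sum (Icc 1 (m - 1)) _ _ fun k hk =>
      one_sub_deprefDefect_le_prod hm hn (s := Icc (m - k) (m - 1)) (by simp; omega)
    rw [nsmul_eq_mul, Nat.card_Icc, Nat.add_sub_cancel, hcard] at this
    unfold deprefBeta
    nlinarith
  · have := sum_le_card_nsmul (Icc 1 (m - 1)) _ _ fun k _ =>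
      prod_deprefFactor_le_one hm hn (Icc (m - k) (m - 1))
    rw [nsmul_eq_mul, Nat.card_Icc, Nat.add_sub_cancel, hcard] at this
    unfold deprefBeta
    linarith

theorem deprefStep_nonneg (hm : 1 ≤ m) (hn : 2 ≤ n) {x : ℝ} (hx : 0 ≤ x) :
    0 ≤ deprefStep m n x := by
  have hn' : (2 : ℝ) ≤ n := by exact_mod_cast hn
  have hα := (deprefAlpha_mem_Icc hm hn).1
  have hβ := (deprefBeta_mem_Icc hm hn).1
  have hc := deprefDefect_le_one hn
  have : 0 ≤ deprefBeta m n := le_trans (by positivity) hβ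
  unfold deprefStep
  have := div_nonneg this (by linarith : (0 : ℝ) ≤ n - 1)
  nlinarith

theorem deprefStep_le (hm : 1 ≤ m) (hn : 2 ≤ n) {x : ℝ} (hx : 0 ≤ x) :
    deprefStep m n x ≤ x + m / ((n : ℝ) - 1) := by
  have hn' : (2 : ℝ) ≤ n := by exact_mod_cast hn
  unfold deprefStep
  gcongr
  · exact mul_le_of_le_one_left hx (deprefAlpha_mem_Icc hm hn).2
  · linarith
  · exact (deprefBeta_mem_Icc hm hn).2

theorem abs_deprefStep_sub_le (hm : 1 ≤ m) (hn : 2 ≤ n) {x : ℝ} (hx : 0 ≤ x) :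
    |deprefStep m n x - x - m / ((n : ℝ) - 1)| ≤ deprefDefect n * (x + m) := by
  have hn' : (1 : ℝ) ≤ n - 1 := by
    have : (2 : ℝ) ≤ n := by exact_mod_cast hn
    linarith
  obtain ⟨hα, -⟩ := deprefAlpha_mem_Icc hm hn
  obtain ⟨hβ, -⟩ := deprefBeta_mem_Icc hm hn
  have hm' : (0 : ℝ) ≤ m := m.cast_nonneg
  have hc := deprefDefect_nonneg hn
  have hβ' : -(m * deprefDefect n) ≤ (deprefBeta m n - m) / ((n : ℝ) - 1) := by
    rw [le_div_iff₀ (by linarith)]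
    nlinarith [mul_le_mul_of_nonneg_left hn' (mul_nonneg hm' hc)]
  have hup := deprefStep_le hm hn hx
  rw [abs_le]
  constructor
  · have : deprefStep m n x - x - m / ((n : ℝ) - 1)
        = (deprefAlpha m n - 1) * x + (deprefBeta m n - m) / ((n : ℝ) - 1) := by
      unfold deprefStep; ring
    rw [this]
    nlinarith
  · nlinarith

end

/-- Consider the recursion `a_{n+1} = α_n a_n + β_n/(n-1)` for `n ≥ i`, with `a_i = m`, where
`α_n = ∏_{j=0}^{m-1} (1 - 1/((n-1)(j + m(2n-1))))` and
`β_n = 1 + ∑_{k=1}^{m-1} ∏_{j=m-k}^{m-1} (1 - 1/((n-1)(j + m(2n-1))))`.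
Then `a_n / (m log n) → 1` as `n → ∞`. -/
theorem depref_linear_mean_recursion (m i : ℕ) (hm : 1 ≤ m) (hi : 2 ≤ i)
    (a : ℕ → ℝ) (ha : a i = (m : ℝ))
    (hrec : ∀ n : ℕ, i ≤ n →
      a (n + 1) =
        (∏ j ∈ Finset.range m,
            (1 - 1 / (((n : ℝ) - 1) * ((j : ℝ) + (m : ℝ) * (2 * (n : ℝ) - 1))))) * a n +
        (1 + ∑ k ∈ Finset.Icc 1 (m - 1),
            ∏ j ∈ Finset.Icc (m - k) (m - 1),
              (1 - 1 / (((n : ℝ) - 1) * ((j : ℝ) + (m : ℝ) * (2 * (n : ℝ) - 1))))) /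
          ((n : ℝ) - 1)) :
    Filter.Tendsto (fun n : ℕ => a n / ((m : ℝ) * Real.log n)) Filter.atTop (nhds 1) := by
  have hstep : ∀ n ≥ i, a (n + 1) = deprefStep m n (a n) := hrec
  have hnonneg : ∀ n ≥ i, 0 ≤ a n := by
    intro n hn
    induction n, hn using Nat.le_induction with
    | base => rw [ha]; positivity
    | succ n hn ih => rw [hstep n hn]; exact deprefStep_nonneg hm (hi.trans hn) ih
  have hgrowth : ∀ n ≥ i, a n ≤ 4 * m * √n :=
    le_four_mul_sqrt_of_succ_le_add hi m.cast_nonneg ha.le fun n hn =>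
      (hstep n hn).trans_le (deprefStep_le hm (hi.trans hn) (hnonneg n hn))
  refine tendsto_div_mul_log_of_summable (by positivity) <| Summable.of_norm_bounded_eventually_nat
    ((Real.summable_nat_rpow_inv.2 (by norm_num : (1 : ℝ) < 3 / 2)).mul_left (10 * (m : ℝ))) ?_
  filter_upwards [eventually_ge_atTop i] with n hn
  have h2 : 2 ≤ n := hi.trans hn
  have hsqrt : 1 ≤ √(n : ℝ) := Real.one_le_sqrt.2 (by exact_mod_cast (by omega : 1 ≤ n))
  rw [Real.norm_eq_abs, hstep n hn]
  calc _ ≤ deprefDefect n * (a n + m) := abs_deprefStep_sub_le hm h2 (hnonneg n hn)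
    _ ≤ deprefDefect n * (5 * m * √n) := by
        gcongr
        · exact deprefDefect_nonneg h2
        · nlinarith [hgrowth n hn]
    _ = 5 * m * (deprefDefect n * √n) := by ring
    _ ≤ 5 * m * (2 * ((n : ℝ) ^ (3 / 2 : ℝ))⁻¹) :=
        mul_le_mul_of_nonneg_left (deprefDefect_mul_sqrt_le h2) (by positivity)
    _ = 10 * m * ((n : ℝ) ^ (3 / 2 : ℝ))⁻¹ := by ring
end

section
/- In the linear de-preferential attachment model with m=1, there is a constant C₁ such that |E[N_k(n)] − n·2^{-k}| ≤ C₁ log n for all n ≥ 2 and all k ≥ 1. -/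
/-!
Conditioning on `ℱ n` turns the attachment rule into the linear recurrence
`a_k(n+1) = (1 - c_n(k)) a_k(n) + c_n(k-1) a_{k-1}(n) + 1_{k=1}` for `a_k(n) = E[N_k(n)]`,
with coefficients `c_n(j) = (1/(n-1))(1 - j/(2n-1)) ∈ [0, 1]` for `j < 2n`. The errors `e_k(n) = a_k(n) - n 2^{-k}` then satisfy
`e_k(n+1) = (1 - c_n(k)) e_k(n) + c_n(k-1) e_{k-1}(n) + O(1/n)`, and since
`c_n(k-1) - c_n(k) = 1/((n-1)(2n-1))`, the bound `B_n = max_k |e_k(n)|` obeys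
`B_{n+1} ≤ (1 + O(1/n²)) B_n + 1/n`, which `10 log n` absorbs from `n = 3` on. For `k > n` there
are no vertices of degree `k`, and `n 2^{-k} ≤ 1`.
-/

open MeasureTheory ProbabilityTheory

noncomputable def attachProb (n j : ℕ) : ℝ := (1 / ((n : ℝ) - 1)) * (1 - (j : ℝ) / (2 * (n : ℝ) - 1))

section attachProb

variable {n : ℕ}

lemma attachProb_nonneg (hn : 2 ≤ n) {j : ℕ} (hj : j + 1 ≤ 2 * n) : 0 ≤ attachProb n j := by
  have hn' : (2 : ℝ) ≤ n := by exact_mod_cast hn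
  have hj' : (j : ℝ) + 1 ≤ 2 * n := by exact_mod_cast hj
  unfold attachProb
  refine mul_nonneg (by rw [one_div_nonneg]; linarith) ?_
  rw [sub_nonneg, div_le_one (by linarith)]
  linarith

lemma attachProb_le_one (hn : 2 ≤ n) (j : ℕ) : attachProb n j ≤ 1 := by
  have hn' : (2 : ℝ) ≤ n := by exact_mod_cast hn
  have h₁ : 1 / ((n : ℝ) - 1) ≤ 1 := by rw [div_le_one (by linarith)]; linarith
  have h₂ : 1 - (j : ℝ) / (2 * n - 1) ≤ 1 := by
    have : 0 ≤ (j : ℝ) / (2 * n - 1) := div_nonneg j.cast_nonneg (by linarith)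
    linarith
  exact (mul_le_of_le_one_right (one_div_nonneg.mpr (by linarith)) h₂).trans h₁

lemma attachProb_sub_attachProb_succ (hn : 2 ≤ n) (j : ℕ) :
    attachProb n j - attachProb n (j + 1) = 1 / (((n : ℝ) - 1) * (2 * n - 1)) := by
  have hn' : (2 : ℝ) ≤ n := by exact_mod_cast hn
  have h₁ : (n : ℝ) - 1 ≠ 0 := by linarith
  have h₂ : 2 * (n : ℝ) - 1 ≠ 0 := by linarith
  unfold attachProb
  push_cast
  field_simp
  ring

lemma attachProb_one (hn : 2 ≤ n) : attachProb n 1 = 2 / (2 * (n : ℝ) - 1) := by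
  have hn' : (2 : ℝ) ≤ n := by exact_mod_cast hn
  have h₁ : (n : ℝ) - 1 ≠ 0 := by linarith
  have h₂ : 2 * (n : ℝ) - 1 ≠ 0 := by linarith
  unfold attachProb
  rw [Nat.cast_one, one_sub_div h₂, div_mul_div_comm, div_eq_div_iff (mul_ne_zero h₁ h₂) h₂]
  ring

end attachProb

lemma abs_mul_add_mul_add_le {p q u v r B : ℝ} (hp : 0 ≤ p) (hq : 0 ≤ q) (hu : |u| ≤ B)
    (hv : |v| ≤ B) : |p * u + q * v + r| ≤ (p + q) * B + |r| := by
  calc |p * u + q * v + r| ≤ |p * u| + |q * v| + |r| := abs_add_three _ _ _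
    _ = p * |u| + q * |v| + |r| := by rw [abs_mul, abs_mul, abs_of_nonneg hp, abs_of_nonneg hq]
    _ ≤ (p + q) * B + |r| := by nlinarith

lemma inv_add_one_le_log_add_one_sub_log {x : ℝ} (hx : 0 < x) :
    1 / (x + 1) ≤ Real.log (x + 1) - Real.log x := by
  have h := Real.one_sub_inv_le_log_of_pos (show 0 < (x + 1) / x by positivity)
  rw [Real.log_div (by linarith) hx.ne', inv_div] at h
  have : 1 - x / (x + 1) = 1 / (x + 1) := by field_simp; ring
  linarith

lemma ten_log_mul_add_inv_le {x : ℝ} (hx : 3 ≤ x) :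
    10 * Real.log x * (1 + 1 / ((x - 1) * (2 * x - 1))) + 1 / x ≤ 10 * Real.log (x + 1) := by
  have hD : 0 < (x - 1) * (2 * x - 1) := by nlinarith
  have hlog_nonneg : 0 ≤ Real.log x := Real.log_nonneg (by linarith)
  have hlog_le : Real.log x ≤ x - 1 := Real.log_le_sub_one_of_pos (by linarith)
  have hstep := inv_add_one_le_log_add_one_sub_log (show 0 < x by linarith)
  have h₁ : 10 * Real.log x / ((x - 1) * (2 * x - 1)) ≤ 10 / (2 * x - 1) := by
    rw [div_le_div_iff₀ hD (by linarith)]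
    nlinarith
  have h₂ : 10 / (2 * x - 1) + 1 / x ≤ 10 * (1 / (x + 1)) := by
    rw [div_add_div _ _ (by linarith) (by linarith), mul_one_div,
      div_le_div_iff₀ (by nlinarith) (by linarith)]
    nlinarith
  have : 10 * Real.log x * (1 + 1 / ((x - 1) * (2 * x - 1))) =
      10 * Real.log x + 10 * Real.log x / ((x - 1) * (2 * x - 1)) := by ring
  nlinarith

lemma abs_inv_two_pow_mul_div_le {x : ℝ} (hx : 2 ≤ x) (k : ℕ) :
    |(2 : ℝ)⁻¹ ^ (k + 2) * ((2 * x - x * k - 1) / ((x - 1) * (2 * x - 1)))| ≤ 1 / x := by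
  have hD : 0 < (x - 1) * (2 * x - 1) := by nlinarith
  have hpow : (k : ℝ) + 2 ≤ 2 ^ (k + 1) := by
    exact_mod_cast Nat.succ_le_of_lt (Nat.lt_two_pow_self (n := k + 1))
  have hx2 : (2 : ℝ)⁻¹ ^ (k + 2) * ((k : ℝ) + 2) ≤ 1 / 2 := by
    rw [inv_pow, inv_mul_le_iff₀ (by positivity), pow_succ]
    linarith
  have hnum : |2 * x - x * k - 1| ≤ x * (k + 2) := by
    rw [abs_le]; constructor <;> nlinarith [k.cast_nonneg (α := ℝ)]
  rw [abs_mul, abs_div, abs_of_pos hD, abs_of_pos (by positivity), ← mul_div_assoc,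
    div_le_div_iff₀ hD (by linarith)]
  calc (2 : ℝ)⁻¹ ^ (k + 2) * |2 * x - x * k - 1| * x
      ≤ (2 : ℝ)⁻¹ ^ (k + 2) * (x * (k + 2)) * x := by gcongr
    _ = (2 : ℝ)⁻¹ ^ (k + 2) * ((k : ℝ) + 2) * x ^ 2 := by ring
    _ ≤ 1 / 2 * x ^ 2 := by gcongr
    _ ≤ 1 * ((x - 1) * (2 * x - 1)) := by nlinarith

/-- The recurrence satisfied by `a n k = E[N_k(n)]`, written at degree `k + 1` so that no truncated
subtraction `k - 1` occurs. -/
structure DegreeCountRecurrence (a : ℕ → ℕ → ℝ) : Prop where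
  nonneg : ∀ n k, 0 ≤ a n k
  le : ∀ n k, a n k ≤ n
  zero : ∀ n, 2 ≤ n → a n 0 = 0
  eq_zero_of_lt : ∀ n k, 2 ≤ n → n < k → a n k = 0
  succ : ∀ n k, 2 ≤ n → a (n + 1) (k + 1) =
    (1 - attachProb n (k + 1)) * a n (k + 1) + attachProb n k * a n k + if k = 0 then 1 else 0

namespace DegreeCountRecurrence

variable {a : ℕ → ℕ → ℝ} {n : ℕ}

lemma error_succ_one (h : DegreeCountRecurrence a) (hn : 2 ≤ n) :
    a (n + 1) 1 - ((n : ℝ) + 1) * 2⁻¹ =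
      (1 - attachProb n 1) * (a n 1 - n * 2⁻¹) - 1 / (2 * (2 * n - 1)) := by
  have hn' : (2 : ℝ) ≤ n := by exact_mod_cast hn
  have h₂ : 2 * (n : ℝ) - 1 ≠ 0 := by linarith
  rw [h.succ n 0 hn, if_pos rfl, h.zero n hn, attachProb_one hn]
  field_simp
  ring

lemma error_succ_add_two (h : DegreeCountRecurrence a) (hn : 2 ≤ n) (k : ℕ) :
    a (n + 1) (k + 2) - ((n : ℝ) + 1) * 2⁻¹ ^ (k + 2) =
      (1 - attachProb n (k + 2)) * (a n (k + 2) - n * 2⁻¹ ^ (k + 2)) +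
        attachProb n (k + 1) * (a n (k + 1) - n * 2⁻¹ ^ (k + 1)) +
        2⁻¹ ^ (k + 2) * ((2 * n - n * k - 1) / ((n - 1) * (2 * n - 1))) := by
  have hn' : (2 : ℝ) ≤ n := by exact_mod_cast hn
  have h₁ : (n : ℝ) - 1 ≠ 0 := by linarith
  -- `field_simp` needs the nonvanishing in the normal form `n * 2 - 1` it produces
  have h₂ : (n : ℝ) * 2 - 1 ≠ 0 := by linarith
  rw [h.succ n (k + 1) hn, if_neg k.succ_ne_zero, pow_succ, pow_succ]
  generalize (2 : ℝ)⁻¹ ^ k = x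
  unfold attachProb
  push_cast
  field_simp
  ring

lemma abs_error_le (h : DegreeCountRecurrence a) (n k : ℕ) :
    |a n k - n * 2⁻¹ ^ k| ≤ n := by
  have hx₀ : (0 : ℝ) ≤ 2⁻¹ ^ k := by positivity
  have hx₁ : (2 : ℝ)⁻¹ ^ k ≤ 1 := pow_le_one₀ (by norm_num) (by norm_num)
  have hn : (0 : ℝ) ≤ n := n.cast_nonneg
  rw [abs_le]
  constructor <;> nlinarith [h.nonneg n k, h.le n k]

lemma abs_error_le_one (h : DegreeCountRecurrence a) (hn : 2 ≤ n) {k : ℕ} (hk : n < k) :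
    |a n k - n * 2⁻¹ ^ k| ≤ 1 := by
  have hpow : (n : ℝ) ≤ 2 ^ k := by
    exact_mod_cast (Nat.lt_two_pow_self.trans_le (Nat.pow_le_pow_right two_pos hk.le)).le
  rw [h.eq_zero_of_lt n k hn hk, zero_sub, abs_neg, abs_of_nonneg (by positivity), inv_pow,
    ← div_eq_mul_inv, div_le_one (by positivity)]
  exact hpow

lemma abs_error_succ_le (h : DegreeCountRecurrence a) (hn : 2 ≤ n) {B : ℝ}
    (hB : ∀ k, 1 ≤ k → |a n k - n * 2⁻¹ ^ k| ≤ B) {k : ℕ} (hk₁ : 1 ≤ k) (hk : k ≤ n + 1) :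
    |a (n + 1) k - ((n : ℝ) + 1) * 2⁻¹ ^ k| ≤
      B * (1 + 1 / (((n : ℝ) - 1) * (2 * n - 1))) + 1 / n := by
  have hn' : (2 : ℝ) ≤ n := by exact_mod_cast hn
  have hD : 0 ≤ 1 / (((n : ℝ) - 1) * (2 * n - 1)) := one_div_nonneg.mpr (by nlinarith)
  have hB₀ : 0 ≤ B := (abs_nonneg _).trans (hB 1 le_rfl)
  obtain rfl | ⟨k, rfl⟩ : k = 1 ∨ ∃ j, k = j + 2 := by
    rcases k with _ | _ | j
    exacts [absurd hk₁ (by omega), .inl rfl, .inr ⟨j, rfl⟩]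
  · have hc : 0 ≤ 1 - attachProb n 1 := sub_nonneg.mpr (attachProb_le_one hn 1)
    have hpos : 0 < 2 * (2 * (n : ℝ) - 1) := by linarith
    have hr : |1 / (2 * (2 * (n : ℝ) - 1))| ≤ 1 / n := by
      rw [abs_of_pos (one_div_pos.mpr hpos)]
      exact one_div_le_one_div_of_le (by linarith) (by linarith)
    have hu : |(1 - attachProb n 1) * (a n 1 - n * 2⁻¹)| ≤ 1 * B := by
      rw [abs_mul, abs_of_nonneg hc]
      exact mul_le_mul (by linarith [attachProb_nonneg hn (j := 1) (by omega)])
        (by simpa using hB 1 le_rfl) (abs_nonneg _) zero_le_one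
    rw [pow_one, error_succ_one h hn]
    calc _ ≤ |(1 - attachProb n 1) * (a n 1 - n * 2⁻¹)| + |1 / (2 * (2 * (n : ℝ) - 1))| :=
          abs_sub _ _
      _ ≤ 1 * B + 1 / n := add_le_add hu hr
      _ ≤ _ := by nlinarith
  · rw [error_succ_add_two h hn]
    have hsum : (1 - attachProb n (k + 2)) + attachProb n (k + 1) =
        1 + 1 / (((n : ℝ) - 1) * (2 * n - 1)) := by
      linarith [attachProb_sub_attachProb_succ hn (k + 1)]
    calc _ ≤ ((1 - attachProb n (k + 2)) + attachProb n (k + 1)) * B +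
          |(2 : ℝ)⁻¹ ^ (k + 2) * ((2 * n - n * k - 1) / ((n - 1) * (2 * n - 1)))| :=
          abs_mul_add_mul_add_le (sub_nonneg.mpr (attachProb_le_one hn _))
            (attachProb_nonneg hn (by omega)) (hB (k + 2) (by omega)) (hB (k + 1) (by omega))
      _ ≤ _ := by
          rw [hsum, mul_comm]
          gcongr
          exact abs_inv_two_pow_mul_div_le hn' k

theorem abs_error_le_ten_mul_log (h : DegreeCountRecurrence a) (n : ℕ) (hn : 2 ≤ n) (k : ℕ)
    (hk : 1 ≤ k) : |a n k - n * 2⁻¹ ^ k| ≤ 10 * Real.log n := by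
  have hlog2 : (3 : ℝ) ≤ 10 * Real.log 2 := by linarith [Real.log_two_gt_d9]
  have hsmall : ∀ m : ℕ, 2 ≤ m → m ≤ 3 → ∀ k, |a m k - m * 2⁻¹ ^ k| ≤ 10 * Real.log m := by
    intro m hm₂ hm₃ k
    have hlog : Real.log 2 ≤ Real.log m := Real.log_le_log two_pos (by exact_mod_cast hm₂)
    have : (m : ℝ) ≤ 3 := by exact_mod_cast hm₃
    linarith [h.abs_error_le m k]
  induction n, hn using Nat.le_induction generalizing k with
  | base => exact hsmall 2 le_rfl (by norm_num) k
  | succ n hn ih =>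
    rcases eq_or_lt_of_le hn with rfl | hn₃
    · exact hsmall 3 (by norm_num) le_rfl k
    have hn' : (3 : ℝ) ≤ n := by exact_mod_cast hn₃
    push_cast
    by_cases hkn : k ≤ n + 1
    · calc _ ≤ 10 * Real.log n * (1 + 1 / (((n : ℝ) - 1) * (2 * n - 1))) + 1 / n :=
            h.abs_error_succ_le hn ih hk hkn
        _ ≤ _ := ten_log_mul_add_inv_le hn'
    · have hlog : Real.log 2 ≤ Real.log ((n : ℝ) + 1) := Real.log_le_log two_pos (by linarith)
      have := h.abs_error_le_one (n := n + 1) (k := k) (by omega) (by omega)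
      push_cast at this
      linarith

end DegreeCountRecurrence

lemma degree_mem_Icc (d : ℕ → ℕ → ℕ) (A : ℕ → ℕ) (hinit : d 1 2 = 2 ∧ d 2 2 = 1)
    (hupdate : ∀ n : ℕ, 2 ≤ n → ∀ i,
      d i (n + 1) = if i = n + 1 then 1 else d i n + (if A n = i then 1 else 0))
    {n : ℕ} (hn : 2 ≤ n) {i : ℕ} (hi : i ∈ Finset.Icc 1 n) : d i n ∈ Finset.Icc 1 n := by
  induction n, hn using Nat.le_induction generalizing i with
  | base =>
    obtain rfl | rfl : i = 1 ∨ i = 2 := by simp only [Finset.mem_Icc] at hi; omega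
    · simp [hinit.1]
    · simp [hinit.2]
  | succ n hn ih =>
    rw [hupdate n hn i]
    by_cases hin : i = n + 1
    · simp [hin]
    · have := ih (i := i) (by simp only [Finset.mem_Icc] at hi ⊢; omega)
      simp only [Finset.mem_Icc] at this ⊢
      split_ifs <;> omega

lemma integral_card_filter_eq_sum_measureReal {Ω ι : Type*} [MeasurableSpace Ω] {μ : Measure Ω}
    [IsFiniteMeasure μ] (s : Finset ι) {f : ι → Ω → ℕ} (hf : ∀ i, Measurable (f i)) (k : ℕ) :
    ∫ ω, ((s.filter fun i => f i ω = k).card : ℝ) ∂μ = ∑ i ∈ s, μ.real {ω | f i ω = k} := by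
  have hmeas : ∀ i, MeasurableSet {ω | f i ω = k} := fun i => hf i (measurableSet_singleton k)
  have hind : ∀ i ω, (if f i ω = k then (1 : ℝ) else 0) = {ω | f i ω = k}.indicator 1 ω :=
    fun i ω => by simp [Set.indicator_apply]
  simp_rw [Finset.natCast_card_filter, hind]
  rw [integral_finsetSum _ fun i _ => (integrable_const 1).indicator (hmeas i)]
  exact Finset.sum_congr rfl fun i _ => integral_indicator_one (hmeas i)

lemma measureReal_inter_eq_mul_of_condExp {Ω : Type*} {m m₀ : MeasurableSpace Ω} {μ : Measure Ω}
    [IsFiniteMeasure μ] (hm : m ≤ m₀) {B S : Set Ω} (hB : MeasurableSet[m] B)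
    (hS : MeasurableSet S) {g : Ω → ℝ} (hg : μ[S.indicator (fun _ => (1 : ℝ)) | m] =ᵐ[μ] g)
    {c : ℝ} (hgB : ∀ ω ∈ B, g ω = c) : μ.real (B ∩ S) = c * μ.real B := by
  calc μ.real (B ∩ S) = ∫ ω in B, S.indicator (fun _ => (1 : ℝ)) ω ∂μ := by
        rw [← Pi.one_def, integral_indicator_one hS, measureReal_restrict_apply hS, Set.inter_comm]
    _ = ∫ ω in B, μ[S.indicator (fun _ => (1 : ℝ)) | m] ω ∂μ :=
        (setIntegral_condExp hm ((integrable_const 1).indicator hS) hB).symm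
    _ = ∫ _ in B, c ∂μ :=
        setIntegral_congr_ae (hm _ hB) (hg.mono fun ω hω hωB => hω.trans (hgB ω hωB))
    _ = c * μ.real B := by rw [setIntegral_const, smul_eq_mul, mul_comm]

section Model

variable {Ω : Type*} [MeasurableSpace Ω] {μ : Measure Ω} {d : ℕ → ℕ → Ω → ℕ} {A : ℕ → Ω → ℕ}
  {ℱ : ℕ → MeasurableSpace Ω}

lemma measureReal_degree_inter_attach_eq [IsFiniteMeasure μ]
    (hℱ : ∀ n, ℱ n ≤ (inferInstance : MeasurableSpace Ω)) {n i : ℕ}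
    (hdmeas : @Measurable Ω ℕ (ℱ n) _ (d i n)) (hAmeas : @Measurable Ω ℕ (ℱ (n + 1)) _ (A n))
    (hlaw : μ[(fun ω => Set.indicator {ω' | A n ω' = i} (fun _ => (1 : ℝ)) ω) | ℱ n]
        =ᵐ[μ] fun ω => (1 / ((n : ℝ) - 1)) * (1 - (d i n ω : ℝ) / (2 * (n : ℝ) - 1)))
    (j : ℕ) :
    μ.real ({ω | d i n ω = j} ∩ {ω | A n ω = i}) = attachProb n j * μ.real {ω | d i n ω = j} :=
  measureReal_inter_eq_mul_of_condExp (hℱ n) (hdmeas (measurableSet_singleton j))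
    (hℱ (n + 1) _ (hAmeas (measurableSet_singleton i))) hlaw fun ω hω => by
      rw [show d i n ω = j from hω, attachProb]

lemma measureReal_degree_succ_eq [IsFiniteMeasure μ]
    (hℱ : ∀ n, ℱ n ≤ (inferInstance : MeasurableSpace Ω)) {n i : ℕ}
    (hdmeas : @Measurable Ω ℕ (ℱ n) _ (d i n)) (hAmeas : @Measurable Ω ℕ (ℱ (n + 1)) _ (A n))
    (hupdate : ∀ ω, d i (n + 1) ω = d i n ω + if A n ω = i then 1 else 0)
    (hlaw : μ[(fun ω => Set.indicator {ω' | A n ω' = i} (fun _ => (1 : ℝ)) ω) | ℱ n]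
        =ᵐ[μ] fun ω => (1 / ((n : ℝ) - 1)) * (1 - (d i n ω : ℝ) / (2 * (n : ℝ) - 1)))
    (k : ℕ) :
    μ.real {ω | d i (n + 1) ω = k + 1} =
      (1 - attachProb n (k + 1)) * μ.real {ω | d i n ω = k + 1} +
        attachProb n k * μ.real {ω | d i n ω = k} := by
  set S := {ω | A n ω = i}
  have hS : MeasurableSet S := hℱ (n + 1) _ (hAmeas (measurableSet_singleton i))
  have hB : ∀ j, MeasurableSet {ω | d i n ω = j} := fun j =>
    hℱ n _ (hdmeas (measurableSet_singleton j))
  have hset : {ω | d i (n + 1) ω = k + 1} =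
      ({ω | d i n ω = k + 1} \ S) ∪ ({ω | d i n ω = k} ∩ S) := by
    ext ω
    by_cases hA : A n ω = i <;> simp [S, hupdate, hA]
  have hdiff : μ.real ({ω | d i n ω = k + 1} \ S) =
      μ.real {ω | d i n ω = k + 1} - μ.real ({ω | d i n ω = k + 1} ∩ S) := by
    rw [← measureReal_inter_add_sdiff (s := {ω | d i n ω = k + 1}) hS]
    ring
  rw [hset, measureReal_union (Set.disjoint_sdiff_left.mono_right Set.inter_subset_right)
      ((hB k).inter hS), hdiff, measureReal_degree_inter_attach_eq hℱ hdmeas hAmeas hlaw,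
    measureReal_degree_inter_attach_eq hℱ hdmeas hAmeas hlaw]
  ring

theorem degreeCountRecurrence_sum_measureReal [IsProbabilityMeasure μ]
    (hℱ : ∀ n, ℱ n ≤ (inferInstance : MeasurableSpace Ω))
    (hdmeas : ∀ i n, @Measurable Ω ℕ (ℱ n) _ (d i n))
    (hAmeas : ∀ n, @Measurable Ω ℕ (ℱ (n + 1)) _ (A n))
    (hinit : ∀ ω, d 1 2 ω = 2 ∧ d 2 2 ω = 1)
    (hupdate : ∀ n : ℕ, 2 ≤ n → ∀ i ω,
      d i (n + 1) ω = if i = n + 1 then 1 else d i n ω + (if A n ω = i then 1 else 0))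
    (hlaw : ∀ n : ℕ, 2 ≤ n → ∀ i : ℕ, 1 ≤ i → i ≤ n →
      μ[(fun ω => Set.indicator {ω' | A n ω' = i} (fun _ => (1 : ℝ)) ω) | ℱ n]
        =ᵐ[μ] fun ω => (1 / ((n : ℝ) - 1)) * (1 - (d i n ω : ℝ) / (2 * (n : ℝ) - 1))) :
    DegreeCountRecurrence fun n k => ∑ i ∈ Finset.Icc 1 n, μ.real {ω | d i n ω = k} := by
  have hvanish : ∀ n k, 2 ≤ n → k ∉ Finset.Icc 1 n →
      ∑ i ∈ Finset.Icc 1 n, μ.real {ω | d i n ω = k} = 0 := by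
    refine fun n k hn hk => Finset.sum_eq_zero fun i hi => ?_
    have hempty : {ω | d i n ω = k} = ∅ := Set.eq_empty_of_forall_notMem fun ω hω =>
      hk (hω ▸ degree_mem_Icc (fun i n => d i n ω) (fun n => A n ω) (hinit ω)
        (fun n hn i => hupdate n hn i ω) hn hi)
    rw [hempty, measureReal_empty]
  refine ⟨fun n k => Finset.sum_nonneg fun i _ => measureReal_nonneg,
    fun n k => (Finset.sum_le_sum fun i _ => measureReal_le_one).trans (by simp),
    fun n hn => hvanish n 0 hn (by simp), fun n k hn hk => hvanish n k hn (by simp; omega),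
    fun n k hn => ?_⟩
  have hnew : μ.real {ω | d (n + 1) (n + 1) ω = k + 1} = if k = 0 then 1 else 0 := by
    by_cases hk : k = 0 <;> simp [hupdate n hn (n + 1), hk]
  rw [Finset.sum_Icc_succ_top (by omega), hnew,
    Finset.sum_congr rfl fun i hi => measureReal_degree_succ_eq hℱ (hdmeas i n) (hAmeas n)
      (fun ω => by rw [hupdate n hn i ω, if_neg (by simp at hi; omega)])
      (hlaw n hn i (Finset.mem_Icc.mp hi).1 (Finset.mem_Icc.mp hi).2) k,
    Finset.sum_add_distrib, Finset.mul_sum, Finset.mul_sum]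

end Model

theorem depref_linear_expected_degree_count_general
    {Ω : Type*} [MeasurableSpace Ω] (μ : Measure Ω) [IsProbabilityMeasure μ]
    (d : ℕ → ℕ → Ω → ℕ) (A : ℕ → Ω → ℕ) (ℱ : ℕ → MeasurableSpace Ω)
    (hℱ : ∀ n, ℱ n ≤ (inferInstance : MeasurableSpace Ω))
    (hdmeas : ∀ i n, @Measurable Ω ℕ (ℱ n) _ (d i n))
    (hAmeas : ∀ n, @Measurable Ω ℕ (ℱ (n + 1)) _ (A n))
    (hinit : ∀ ω, d 1 2 ω = 2 ∧ d 2 2 ω = 1)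
    (hupdate : ∀ n : ℕ, 2 ≤ n → ∀ i ω,
      d i (n + 1) ω = if i = n + 1 then 1 else d i n ω + (if A n ω = i then 1 else 0))
    (hlaw : ∀ n : ℕ, 2 ≤ n → ∀ i : ℕ, 1 ≤ i → i ≤ n →
      μ[(fun ω => Set.indicator {ω' | A n ω' = i} (fun _ => (1 : ℝ)) ω) | ℱ n]
        =ᵐ[μ] fun ω => (1 / ((n : ℝ) - 1)) * (1 - (d i n ω : ℝ) / (2 * (n : ℝ) - 1))) :
    ∃ C₁ : ℝ, ∀ n : ℕ, 2 ≤ n → ∀ k : ℕ, 1 ≤ k →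
      |(∫ ω, (((Finset.Icc 1 n).filter (fun i => d i n ω = k)).card : ℝ) ∂μ) -
          (n : ℝ) * ((2 : ℝ)⁻¹) ^ k| ≤ C₁ * Real.log n := by
  have hrec := degreeCountRecurrence_sum_measureReal hℱ hdmeas hAmeas hinit hupdate hlaw
  refine ⟨10, fun n hn k hk => ?_⟩
  rw [integral_card_filter_eq_sum_measureReal _
    (fun i => (hdmeas i n).mono (hℱ n) le_rfl) k]
  exact hrec.abs_error_le_ten_mul_log n hn k hk

/-- In the linear de-preferential attachment model with `m = 1`, there is a constant `C₁`
such that `|E[N_k(n)] - n·2^{-k}| ≤ C₁ log n` for all `n ≥ 2` and all `k ≥ 1`, where `N_k(n)`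
is the number of degree-`k` vertices in `G_n`.
The model: `d i n` is the degree of vertex `i` in `G_n` (starting from `G_2` with degrees
`d 1 2 = 2`, `d 2 2 = 1`), the vertex `v_{n+1}` attaches to the random vertex `A n`, and
conditionally on `ℱ n` the vertex `i ∈ {1,…,n}` is chosen with probability
`(1/(n-1))(1 - d_i(n)/(2n-1))`. -/
theorem depref_linear_expected_degree_count
    {Ω : Type*} [MeasurableSpace Ω] (μ : Measure Ω) [IsProbabilityMeasure μ]
    (d : ℕ → ℕ → Ω → ℕ) (A : ℕ → Ω → ℕ) (ℱ : ℕ → MeasurableSpace Ω)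
    (hℱ : ∀ n, ℱ n ≤ (inferInstance : MeasurableSpace Ω))
    (hℱmono : ∀ n, ℱ n ≤ ℱ (n + 1))
    (hdmeas : ∀ i n, @Measurable Ω ℕ (ℱ n) _ (d i n))
    (hAmeas : ∀ n, @Measurable Ω ℕ (ℱ (n + 1)) _ (A n))
    (hinit : ∀ ω, d 1 2 ω = 2 ∧ d 2 2 ω = 1)
    (hrange : ∀ n : ℕ, 2 ≤ n → ∀ ω, 1 ≤ A n ω ∧ A n ω ≤ n)
    (hupdate : ∀ n : ℕ, 2 ≤ n → ∀ i ω,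
      d i (n + 1) ω = if i = n + 1 then 1 else d i n ω + (if A n ω = i then 1 else 0))
    (hlaw : ∀ n : ℕ, 2 ≤ n → ∀ i : ℕ, 1 ≤ i → i ≤ n →
      μ[(fun ω => Set.indicator {ω' | A n ω' = i} (fun _ => (1 : ℝ)) ω) | ℱ n]
        =ᵐ[μ] fun ω => (1 / ((n : ℝ) - 1)) * (1 - (d i n ω : ℝ) / (2 * (n : ℝ) - 1))) :
    ∃ C₁ : ℝ, ∀ n : ℕ, 2 ≤ n → ∀ k : ℕ, 1 ≤ k →
      |(∫ ω, (((Finset.Icc 1 n).filter (fun i => d i n ω = k)).card : ℝ) ∂μ) -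
          (n : ℝ) * ((2 : ℝ)⁻¹) ^ k| ≤ C₁ * Real.log n :=
  depref_linear_expected_degree_count_general μ d A ℱ hℱ hdmeas hAmeas hinit hupdate hlaw
end

section
/- Let Z(t) be a pure birth process with Z(0)=m and rates 1/i, and let (c_n) be a random sequence with c_n/ (κ log n) → 1 a.s. for a constant κ > 0, independent increments allowing Z(τ_n − τ_i)/√(c_n) → √2 a.s. whenever (τ_n − τ_i)/c_n → 1 a.s. Then Z(τ_n − τ_i)/√(κ log n) → √2 a.s.; i.e., the degree of a fixed vertex in the inverse de-preferential model with m=1 satisfies d_i(n)/√(log n) → √(2/λ*) a.s. -/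
/-!
On every sample path this is a deterministic statement. Put `t n = τ n - τ i` and
`a n = κ log n`. The two hypotheses on `c` give `t n / a n → 1`, hence `t n → ∞`, and then
`Z (t n) / √(a n) = (Z (t n) / √(t n)) · √(t n / a n) → √2 · 1`. Pulling `√κ` out of the
normalisation gives the second limit.
-/

open MeasureTheory ProbabilityTheory Filter Real Topology

section RatioLimits

variable {ι : Type*} {l : Filter ι}

theorem Filter.Tendsto.div_trans_of_tendsto_one {t c a : ι → ℝ}
    (htc : Tendsto (fun x => t x / c x) l (𝓝 1)) (hca : Tendsto (fun x => c x / a x) l (𝓝 1))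
    (hc : ∀ᶠ x in l, c x ≠ 0) : Tendsto (fun x => t x / a x) l (𝓝 1) := by
  refine (one_mul (1 : ℝ) ▸ htc.mul hca).congr' ?_
  filter_upwards [hc] with x hx
  exact div_mul_div_cancel₀ hx

theorem Filter.Tendsto.atTop_of_div_tendsto_one {t a : ι → ℝ}
    (hta : Tendsto (fun x => t x / a x) l (𝓝 1)) (ha : Tendsto a l atTop) :
    Tendsto t l atTop := by
  refine (hta.pos_mul_atTop one_pos ha).congr' ?_
  filter_upwards [ha.eventually_gt_atTop 0] with x hx
  exact div_mul_cancel₀ _ hx.ne'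

theorem tendsto_comp_div_sqrt_of_div_tendsto_one {f : ℝ → ℝ} {L : ℝ} {t a : ι → ℝ}
    (hf : Tendsto (fun s => f s / √s) atTop (𝓝 L))
    (hta : Tendsto (fun x => t x / a x) l (𝓝 1)) (ha : Tendsto a l atTop) :
    Tendsto (fun x => f (t x) / √(a x)) l (𝓝 L) := by
  have ht : Tendsto t l atTop := hta.atTop_of_div_tendsto_one ha
  have hsqrt : Tendsto (fun x => √(t x / a x)) l (𝓝 1) := by
    simpa [Function.comp_def] using (continuous_sqrt.tendsto 1).comp hta
  refine (mul_one L ▸ (hf.comp ht).mul hsqrt).congr' ?_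
  filter_upwards [ht.eventually_gt_atTop 0] with x hx
  rw [Function.comp_apply, sqrt_div hx.le, div_mul_div_cancel₀ (sqrt_pos.mpr hx).ne']

end RatioLimits

theorem tendsto_div_sqrt_of_tendsto_div_sqrt_const_mul {ι : Type*} {l : Filter ι}
    {g a : ι → ℝ} {κ L : ℝ} (hκ : 0 < κ)
    (hg : Tendsto (fun x => g x / √(κ * a x)) l (𝓝 L)) :
    Tendsto (fun x => g x / √(a x)) l (𝓝 (L * √κ)) := by
  refine (hg.mul_const √κ).congr fun x => ?_
  rw [sqrt_mul hκ.le, div_mul_eq_div_div_swap, div_mul_cancel₀ _ (sqrt_pos.mpr hκ).ne']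

theorem tendsto_const_mul_log_natCast_atTop {κ : ℝ} (hκ : 0 < κ) :
    Tendsto (fun n : ℕ => κ * log n) atTop atTop :=
  (tendsto_log_atTop.comp tendsto_natCast_atTop_atTop).const_mul_atTop hκ

theorem depref_inverse_fixed_degree_asymptotics_general
    {Ω : Type*} [MeasurableSpace Ω] (μ : Measure Ω)
    (i : ℕ) (κ : ℝ) (hκ : 0 < κ)
    (Z : ℝ → Ω → ℕ) (τ : ℕ → Ω → ℝ) (c : ℕ → Ω → ℝ)
    (hZ : ∀ᵐ ω ∂μ,
      Filter.Tendsto (fun t : ℝ => (Z t ω : ℝ) / Real.sqrt t) Filter.atTop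
        (nhds (Real.sqrt 2)))
    (hcpos : ∀ᵐ ω ∂μ, ∀ n : ℕ, 0 < c n ω)
    (hτ : ∀ᵐ ω ∂μ,
      Filter.Tendsto (fun n : ℕ => (τ n ω - τ i ω) / c n ω) Filter.atTop (nhds 1))
    (hc : ∀ᵐ ω ∂μ,
      Filter.Tendsto (fun n : ℕ => c n ω / (κ * Real.log n)) Filter.atTop (nhds 1)) :
    (∀ᵐ ω ∂μ,
      Filter.Tendsto
        (fun n : ℕ => (Z (τ n ω - τ i ω) ω : ℝ) / Real.sqrt (κ * Real.log n))
        Filter.atTop (nhds (Real.sqrt 2))) ∧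
    (∀ᵐ ω ∂μ,
      Filter.Tendsto
        (fun n : ℕ => (Z (τ n ω - τ i ω) ω : ℝ) / Real.sqrt (Real.log n))
        Filter.atTop (nhds (Real.sqrt (2 * κ)))) := by
  have hnormalised : ∀ᵐ ω ∂μ, Tendsto
      (fun n : ℕ => (Z (τ n ω - τ i ω) ω : ℝ) / √(κ * log n)) atTop (𝓝 √2) := by
    filter_upwards [hZ, hcpos, hτ, hc] with ω hZω hcposω hτω hcω
    have hratio := hτω.div_trans_of_tendsto_one hcω (.of_forall fun n => (hcposω n).ne')
    exact tendsto_comp_div_sqrt_of_div_tendsto_one hZω hratio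
      (tendsto_const_mul_log_natCast_atTop hκ)
  refine ⟨hnormalised, ?_⟩
  filter_upwards [hnormalised] with ω hω
  rw [sqrt_mul zero_le_two]
  exact tendsto_div_sqrt_of_tendsto_div_sqrt_const_mul hκ hω

/-- Let `Z(t)` be a pure birth process with `Z(0) = m` and rates `1/i` (so that
`Z(t)/√t → √2` a.s.), and let `(c_n)` be a random sequence with `c_n/(κ log n) → 1` a.s. for a
constant `κ > 0`, such that `(τ_n - τ_i)/c_n → 1` a.s.  Then
`Z(τ_n - τ_i)/√(κ log n) → √2` a.s.; i.e. with `κ = 1/λ*`, the degree of a fixed vertex in the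
inverse de-preferential model with `m = 1` satisfies `d_i(n)/√(log n) → √(2/λ*)` a.s. -/
theorem depref_inverse_fixed_degree_asymptotics
    {Ω : Type*} [MeasurableSpace Ω] (μ : Measure Ω) [IsProbabilityMeasure μ]
    (m i : ℕ) (hm : 1 ≤ m) (κ : ℝ) (hκ : 0 < κ)
    (Z : ℝ → Ω → ℕ) (τ : ℕ → Ω → ℝ) (c : ℕ → Ω → ℝ)
    (hZ : ∀ᵐ ω ∂μ,
      Filter.Tendsto (fun t : ℝ => (Z t ω : ℝ) / Real.sqrt t) Filter.atTop
        (nhds (Real.sqrt 2)))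
    (hcpos : ∀ᵐ ω ∂μ, ∀ n : ℕ, 0 < c n ω)
    (hτ : ∀ᵐ ω ∂μ,
      Filter.Tendsto (fun n : ℕ => (τ n ω - τ i ω) / c n ω) Filter.atTop (nhds 1))
    (hc : ∀ᵐ ω ∂μ,
      Filter.Tendsto (fun n : ℕ => c n ω / (κ * Real.log n)) Filter.atTop (nhds 1)) :
    (∀ᵐ ω ∂μ,
      Filter.Tendsto
        (fun n : ℕ => (Z (τ n ω - τ i ω) ω : ℝ) / Real.sqrt (κ * Real.log n))
        Filter.atTop (nhds (Real.sqrt 2))) ∧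
    (∀ᵐ ω ∂μ,
      Filter.Tendsto
        (fun n : ℕ => (Z (τ n ω - τ i ω) ω : ℝ) / Real.sqrt (Real.log n))
        Filter.atTop (nhds (Real.sqrt (2 * κ)))) :=
  depref_inverse_fixed_degree_asymptotics_general μ i κ hκ Z τ c hZ hcpos hτ hc
end
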